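/- Let A ∈ B^{n×n}, λ ∈ B, K, L a partition of N = {1,...,n}, with L_2, L̃, Λ, and (A_{KK})^*_λ as defined. Set Ñ = L̃ ∪ K, let A' ∈ B^{L_2×Ñ} be the matrix whose columns indexed by L̃ are those of A_{L_2 K} ⊗ (A_{KK})^* ⊗ A_{K L̃} ⊗ Λ_{L̃,L̃} and whose columns indexed by K are those of A_{L_2 K} ⊗ (A_{KK})^*_λ, let b' = λ ⊗ A_{L_2 K} ⊗ (A_{KK})^* ⊗ A_{KL} ⊗ 1_L ∈ B^{L_2}, let I_0 = { i ∈ L_2 : b'_i < λ } and C_j = { i ∈ I_0 : A'_{ij} = λ } for j ∈ Ñ. Then a (K,L) λ-eigenvector of A exists if and only if I_0 = ∪_{j∈Ñ} C_j. -/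

import Mathlib

/-!
Writing `x = (u, y)` along the partition `N = K ∪ L`, one may take `y ≡ λ`: on the box
`x_K ≤ λ ≤ x_L` the `K`-rows of `A ⊗ x = λ ⊗ x` become the λ-bounded fixed-point equation
`u = A_{KK} ⊗ u ⊕ c` with `c_k = λ ⊓ max_{ℓ∈L} a_{kℓ}`, the rows of `L₁` hold automatically, and
each row `i ∈ L₂` asks for `λ ≤ (A_{L₂K} ⊗ u)_i`. These conditions are monotone in `u`, so they
are solvable iff they hold for the greatest λ-bounded solution
`û = (A_{KK})* ⊗ c ⊕ max_i ((A_{KK})*_λ)_{·i}`; its maximality comes from the pigeonhole principle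
on paths of length `|K|`, which must close a cycle. Finally `A_{L₂K} ⊗ û = b' ⊕ A'_{·K}`, so row `i`
is satisfied iff `b'_i = λ` or some `A'_{ij}` with `j ∈ K` equals `λ`; the columns `L̃` of `A'`
stay below `λ` wherever `b'_i < λ`.
-/

noncomputable section

/-- The max-min algebra: the unit interval `[0,1] ⊆ ℝ` with `⊕ = max = ⊔` and `⊗ = min = ⊓`. -/
abbrev B : Type := unitInterval

instance : Fact ((0:ℝ) ≤ 1) := ⟨zero_le_one⟩

/-- Max-min matrix-vector product: `(A ⊗ x)_i = max_j min (A i j) (x j)`. -/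
def mmVec {α β : Type*} (A : Matrix α β B) (x : β → B) : α → B :=
  fun i => ⨆ j, A i j ⊓ x j

/-- Max-min matrix-matrix product. -/
def mmMul {α β γ : Type*} (A : Matrix α β B) (C : Matrix β γ B) : Matrix α γ B :=
  fun i k => ⨆ j, A i j ⊓ C j k

/-- The max-min identity matrix. -/
def mmId (α : Type*) [DecidableEq α] : Matrix α α B :=
  fun i j => if i = j then 1 else 0

/-- Max-min matrix powers, `A^0 = I`. -/
def mmPow {α : Type*} [DecidableEq α] (A : Matrix α α B) : ℕ → Matrix α α B
  | 0 => mmId α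
  | k + 1 => mmMul A (mmPow A k)

/-- The metric matrix `A⁺ = A ⊕ A² ⊕ ... ⊕ Aⁿ`. -/
def mmPlus {α : Type*} [Fintype α] [DecidableEq α] (A : Matrix α α B) : Matrix α α B :=
  fun i j => ⨆ k ∈ Finset.Icc 1 (Fintype.card α), mmPow A k i j

/-- The Kleene star `A* = I ⊕ A ⊕ ... ⊕ A^{n-1}`. -/
def mmStar {α : Type*} [Fintype α] [DecidableEq α] (A : Matrix α α B) : Matrix α α B :=
  fun i j => ⨆ k ∈ Finset.range (Fintype.card α), mmPow A k i j

/-- The matrix `A*_λ`, whose `i`-th column has entries `min (λ, (A⁺)_{ii}, (A*)_{ki})`. -/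
def mmStarLam {α : Type*} [Fintype α] [DecidableEq α] (A : Matrix α α B) (lam : B) :
    Matrix α α B :=
  fun k i => lam ⊓ mmPlus A i i ⊓ mmStar A k i

/-- Submatrix of `A` with rows in `P` and columns in `Q`. -/
def subM {n : ℕ} (A : Matrix (Fin n) (Fin n) B) (P Q : Finset (Fin n)) :
    Matrix ↥P ↥Q B :=
  fun i j => A i j

/-- Subvector of `x` indexed by `P`. -/
def subV {n : ℕ} (x : Fin n → B) (P : Finset (Fin n)) : ↥P → B :=
  fun i => x i

/-- `x` is a `(K,L)` `λ`-eigenvector of `A`: `A ⊗ x = λ ⊗ x`, `x_i ≤ λ` for `i ∈ K`,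
`x_i ≥ λ` for `i ∈ L`. -/
def IsKLEig {n : ℕ} (A : Matrix (Fin n) (Fin n) B) (lam : B) (K L : Finset (Fin n))
    (x : Fin n → B) : Prop :=
  mmVec A x = (fun i => lam ⊓ x i) ∧ (∀ i ∈ K, x i ≤ lam) ∧ (∀ i ∈ L, lam ≤ x i)

/-- `L₁ = {i ∈ L : max_{j∈L} a_{ij} ≥ λ}`. -/
def L1set {n : ℕ} (A : Matrix (Fin n) (Fin n) B) (lam : B) (L : Finset (Fin n)) :
    Finset (Fin n) :=
  L.filter fun i => lam ≤ ⨆ j ∈ L, A i j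

/-- `L₂ = {i ∈ L : max_{j∈L} a_{ij} < λ}`. -/
def L2set {n : ℕ} (A : Matrix (Fin n) (Fin n) B) (lam : B) (L : Finset (Fin n)) :
    Finset (Fin n) :=
  L.filter fun i => (⨆ j ∈ L, A i j) < lam

/-- `L^{>λ,L₁} = {k ∈ L : max_{i ∈ L₁} a_{ik} > λ}`. -/
def LgtL1set {n : ℕ} (A : Matrix (Fin n) (Fin n) B) (lam : B) (L : Finset (Fin n)) :
    Finset (Fin n) :=
  L.filter fun k => lam < ⨆ i ∈ L1set A lam L, A i k

/-- `L^{>λ,K} = {ℓ ∈ L : max_{k ∈ K} ((A_{KK})* ⊗ A_{KL})_{kℓ} > λ}`. (The matrix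
`(A_{KK})* ⊗ A_{K,N}` has, for `ℓ ∈ L`, exactly the same entries in column `ℓ` as
`(A_{KK})* ⊗ A_{KL}`.) -/
def LgtKset {n : ℕ} (A : Matrix (Fin n) (Fin n) B) (lam : B) (K L : Finset (Fin n)) :
    Finset (Fin n) :=
  L.filter fun ℓ =>
    lam < ⨆ k : ↥K, mmMul (mmStar (subM A K K)) (fun (p : ↥K) (q : Fin n) => A p q) k ℓ

/-- `L' = L^{>λ,L₁} ∪ L^{>λ,K}`. -/
def LprimeSet {n : ℕ} (A : Matrix (Fin n) (Fin n) B) (lam : B) (K L : Finset (Fin n)) :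
    Finset (Fin n) :=
  LgtL1set A lam L ∪ LgtKset A lam K L

/-- `L̃ = L \ L'`. -/
def LtilSet {n : ℕ} (A : Matrix (Fin n) (Fin n) B) (lam : B) (K L : Finset (Fin n)) :
    Finset (Fin n) :=
  L \ LprimeSet A lam K L

/-- The submatrix `Λ_{P,Q}` of the matrix `Λ` with `Λ_{ii} = 1` and `Λ_{ij} = λ` for `i ≠ j`. -/
def LamSub {n : ℕ} (lam : B) (P Q : Finset (Fin n)) : Matrix ↥P ↥Q B :=
  fun p q => if (p : Fin n) = (q : Fin n) then 1 else lam

/-- `Ñ = L̃ ∪ K`. -/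
def NtilSet {n : ℕ} (A : Matrix (Fin n) (Fin n) B) (lam : B) (K L : Finset (Fin n)) :
    Finset (Fin n) :=
  LtilSet A lam K L ∪ K

/-- The matrix `A' ∈ B^{L₂ × Ñ}`: its columns indexed by `L̃` are those of
`A_{L₂K} ⊗ (A_{KK})* ⊗ A_{KL̃} ⊗ Λ_{L̃,L̃}` and its columns indexed by `K` are those of
`A_{L₂K} ⊗ (A_{KK})*_λ`. -/
def Aprime {n : ℕ} (A : Matrix (Fin n) (Fin n) B) (lam : B) (K L : Finset (Fin n)) :
    Matrix ↥(L2set A lam L) ↥(NtilSet A lam K L) B :=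
  fun i j =>
    if h : (j : Fin n) ∈ LtilSet A lam K L then
      mmMul (mmMul (mmMul (subM A (L2set A lam L) K) (mmStar (subM A K K)))
        (subM A K (LtilSet A lam K L)))
        (LamSub lam (LtilSet A lam K L) (LtilSet A lam K L)) i ⟨(j : Fin n), h⟩
    else
      mmMul (subM A (L2set A lam L) K) (mmStarLam (subM A K K) lam) i
        ⟨(j : Fin n), (Finset.mem_union.mp j.2).resolve_left h⟩

/-- The vector `b' = λ ⊗ A_{L₂K} ⊗ (A_{KK})* ⊗ A_{KL} ⊗ 1_L ∈ B^{L₂}`. -/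
def bprime {n : ℕ} (A : Matrix (Fin n) (Fin n) B) (lam : B) (K L : Finset (Fin n)) :
    ↥(L2set A lam L) → B :=
  fun i => lam ⊓
    mmVec (mmMul (mmMul (subM A (L2set A lam L) K) (mmStar (subM A K K))) (subM A K L))
      (fun _ => 1) i

/-- `I₀ = {i ∈ L₂ : b'_i < λ}`. -/
def I0set {n : ℕ} (A : Matrix (Fin n) (Fin n) B) (lam : B) (K L : Finset (Fin n)) :
    Set ↥(L2set A lam L) :=
  {i | bprime A lam K L i < lam}

/-- `C_j = {i ∈ I₀ : A'_{ij} = λ}` for `j ∈ Ñ`. -/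
def CsetKL {n : ℕ} (A : Matrix (Fin n) (Fin n) B) (lam : B) (K L : Finset (Fin n))
    (j : ↥(NtilSet A lam K L)) : Set ↥(L2set A lam L) :=
  {i | bprime A lam K L i < lam ∧ Aprime A lam K L i j = lam}


section FiniteSupremum

variable {X ι : Type*} [CompleteLinearOrder X] [Fintype ι] {f : ι → X} {a : X}

theorem le_iSup_iff_of_bot_lt (ha : ⊥ < a) : a ≤ ⨆ i, f i ↔ ∃ i, a ≤ f i := by
  rw [← Finset.sup_univ_eq_iSup, Finset.le_sup_iff ha]
  simp

theorem iSup_lt_iff_of_bot_lt (ha : ⊥ < a) : (⨆ i, f i) < a ↔ ∀ i, f i < a := by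
  rw [← Finset.sup_univ_eq_iSup, Finset.sup_lt_iff ha]
  simp

end FiniteSupremum

section MaxMinAlgebra

variable {α β γ δ : Type*}

theorem mmMul_assoc (A : Matrix α β B) (C : Matrix β γ B) (D : Matrix γ δ B) :
    mmMul (mmMul A C) D = mmMul A (mmMul C D) := by
  funext i l
  simp only [mmMul, iSup_inf_eq, inf_iSup_eq, inf_assoc]
  exact iSup_comm

theorem mmVec_mmMul (A : Matrix α β B) (C : Matrix β γ B) (x : γ → B) :
    mmVec (mmMul A C) x = mmVec A (mmVec C x) := by
  funext i
  simp only [mmVec, mmMul, iSup_inf_eq, inf_iSup_eq, inf_assoc]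
  exact iSup_comm

theorem iSup_mmId_inf [DecidableEq α] (i : α) (f : α → B) : ⨆ j, mmId α i j ⊓ f j = f i := by
  refine le_antisymm (iSup_le fun j => ?_) (le_iSup_of_le i ?_)
  · by_cases h : i = j
    · exact h ▸ inf_le_right
    · simp [mmId, h]
  · simp [mmId, unitInterval.le_one']

theorem mmId_mmMul [DecidableEq α] (A : Matrix α β B) : mmMul (mmId α) A = A :=
  funext fun i => funext fun k => iSup_mmId_inf i fun j => A j k

theorem mmVec_mmId [DecidableEq α] (x : α → B) : mmVec (mmId α) x = x :=
  funext fun i => iSup_mmId_inf i x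

theorem mmVec_mono (A : Matrix α β B) : Monotone (mmVec A) :=
  fun _ _ h _ => iSup_mono fun j => inf_le_inf_left _ (h j)

theorem mmVec_le_of_le (A : Matrix α β B) {x : β → B} {c : B} (h : ∀ j, x j ≤ c) (i : α) :
    mmVec A x i ≤ c :=
  iSup_le fun j => inf_le_right.trans (h j)

theorem mmVec_sup (A : Matrix α β B) (x y : β → B) :
    mmVec A (x ⊔ y) = mmVec A x ⊔ mmVec A y := by
  funext i
  simp only [mmVec, Pi.sup_apply, inf_sup_left, iSup_sup_eq]

theorem mmVec_inf_left (A : Matrix α β B) (c : B) (x : β → B) :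
    mmVec A (fun j => c ⊓ x j) = fun i => c ⊓ mmVec A x i := by
  funext i
  simp only [mmVec, inf_iSup_eq, inf_left_comm]

theorem mmPow_add [DecidableEq α] (A : Matrix α α B) (s t : ℕ) :
    mmPow A (s + t) = mmMul (mmPow A s) (mmPow A t) := by
  induction s with
  | zero => rw [Nat.zero_add]; exact (mmId_mmMul _).symm
  | succ s ih =>
    rw [Nat.succ_add]
    exact (congrArg (mmMul A) ih).trans (mmMul_assoc _ _ _).symm

theorem le_mmPow_of_path [DecidableEq α] (A : Matrix α α B) {w : B} (f : ℕ → α) (d : ℕ) :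
    ∀ a, (∀ s, a ≤ s → s < a + d → w ≤ A (f s) (f (s + 1))) →
      w ≤ mmPow A d (f a) (f (a + d)) := by
  induction d with
  | zero => intro a _; simp [mmPow, mmId, unitInterval.le_one']
  | succ d ih =>
    intro a hf
    have hrest := ih (a + 1) fun s hs₁ hs₂ => hf s (by omega) (by omega)
    rw [show a + 1 + d = a + (d + 1) by omega] at hrest
    exact le_iSup_of_le (f (a + 1)) (le_inf (hf a le_rfl (by omega)) hrest)

end MaxMinAlgebra

section KleeneStar

variable {α : Type*} [Fintype α] [DecidableEq α] (A : Matrix α α B)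

theorem mmPow_le_mmStar {s : ℕ} (hs : s < Fintype.card α) (k p : α) :
    mmPow A s k p ≤ mmStar A k p :=
  le_biSup (fun t => mmPow A t k p) (Finset.mem_range.mpr hs)

theorem mmPow_le_mmPlus {s : ℕ} (hs₁ : 1 ≤ s) (hs₂ : s ≤ Fintype.card α) (k p : α) :
    mmPow A s k p ≤ mmPlus A k p :=
  le_biSup (fun t => mmPow A t k p) (Finset.mem_Icc.mpr ⟨hs₁, hs₂⟩)

theorem mmMul_mmStar : mmMul A (mmStar A) = mmPlus A := by
  funext k p
  apply le_antisymm
  · refine iSup_le fun z => ?_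
    simp only [mmStar, inf_iSup₂_eq]
    exact iSup₂_le fun s hs => (le_iSup (fun y => A k y ⊓ mmPow A s y p) z).trans
      (mmPow_le_mmPlus A (s := s + 1) (by omega) (Finset.mem_range.mp hs) k p)
  · refine iSup₂_le fun s hs => ?_
    obtain ⟨hs₁, hs₂⟩ := Finset.mem_Icc.mp hs
    obtain ⟨s, rfl⟩ := Nat.exists_eq_add_of_le' hs₁
    exact iSup_mono fun z => inf_le_inf_left _ (mmPow_le_mmStar A (by omega) z p)

theorem exists_path_of_le_mmPow {w : B} (hw : ⊥ < w) :
    ∀ {t : ℕ} {k p : α}, w ≤ mmPow A t k p →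
      ∃ f : ℕ → α, f 0 = k ∧ f t = p ∧ ∀ s < t, w ≤ A (f s) (f (s + 1))
  | 0, k, p, h => by
    have hkp : k = p := by
      by_contra hkp
      exact hw.ne' (show w = 0 by simpa [mmPow, mmId, hkp] using h)
    exact ⟨fun _ => k, rfl, hkp, by simp⟩
  | t + 1, k, p, h => by
    obtain ⟨z, hz⟩ := (le_iSup_iff_of_bot_lt hw).mp h
    obtain ⟨g, rfl, hgt, hg⟩ := exists_path_of_le_mmPow hw (le_inf_iff.mp hz).2
    refine ⟨fun s => Nat.casesOn s k g, rfl, hgt, ?_⟩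
    rintro (_ | s) hs
    · exact (le_inf_iff.mp hz).1
    · exact hg s (by omega)

/-- A walk of length `|α|` visits some vertex twice. -/
theorem mmPow_card_le_cycle (k p : α) :
    ∃ z a b c, 0 < b ∧ a + b + c = Fintype.card α ∧
      mmPow A (Fintype.card α) k p ≤ mmPow A a k z ⊓ mmPow A b z z ⊓ mmPow A c z p := by
  rcases eq_bot_or_bot_lt (mmPow A (Fintype.card α) k p) with hw | hw
  · exact ⟨k, 0, Fintype.card α, 0, Fintype.card_pos_iff.mpr ⟨k⟩, by simp, hw ▸ bot_le⟩
  obtain ⟨f, hf0, hfn, hf⟩ := exists_path_of_le_mmPow A hw le_rfl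
  obtain ⟨a, b, hab, hfab⟩ :=
    Fintype.exists_ne_map_eq_of_card_lt (fun s : Fin (Fintype.card α + 1) => f s) (by simp)
  wlog hlt : a < b generalizing a b
  · exact this b a hab.symm hfab.symm (lt_of_le_of_ne (not_lt.mp hlt) hab.symm)
  have hlt' : (a : ℕ) < b := hlt
  have hbn : (b : ℕ) ≤ Fintype.card α := Nat.lt_succ_iff.mp b.2
  have seg : ∀ x d, x + d ≤ Fintype.card α → _ ≤ mmPow A d (f x) (f (x + d)) :=
    fun x d h => le_mmPow_of_path A f d x fun s _ hs => hf s (by omega)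
  refine ⟨f a, a, b - a, Fintype.card α - b, by omega, by omega, le_inf (le_inf ?_ ?_) ?_⟩
  · simpa [hf0] using seg 0 a (by omega)
  · simpa [show (a : ℕ) + (b - a) = b by omega, ← hfab] using seg a (b - a) (by omega)
  · simpa [show (b : ℕ) + (Fintype.card α - b) = Fintype.card α by omega, hfn, hfab]
      using seg b (Fintype.card α - b) (by omega)

theorem mmPow_card_le_mmStar (k p : α) : mmPow A (Fintype.card α) k p ≤ mmStar A k p := by
  obtain ⟨z, a, b, c, hb, habc, h⟩ := mmPow_card_le_cycle A k p
  calc mmPow A (Fintype.card α) k p ≤ mmPow A a k z ⊓ mmPow A c z p :=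
        h.trans (inf_le_inf_right _ inf_le_left)
    _ ≤ mmPow A (a + c) k p := by
        rw [mmPow_add]; exact le_iSup (fun y => mmPow A a k y ⊓ mmPow A c y p) z
    _ ≤ mmStar A k p := mmPow_le_mmStar A (by omega) k p

theorem mmPow_card_le_iSup_mmStar_inf_mmPlus (k p : α) :
    mmPow A (Fintype.card α) k p ≤ ⨆ z, mmStar A k z ⊓ mmPlus A z z := by
  obtain ⟨z, a, b, c, hb, habc, h⟩ := mmPow_card_le_cycle A k p
  exact le_iSup_of_le z <| h.trans <| inf_le_left.trans <|
    inf_le_inf (mmPow_le_mmStar A (by omega) k z) (mmPow_le_mmPlus A hb (by omega) z z)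

theorem mmPlus_le_mmStar (k p : α) : mmPlus A k p ≤ mmStar A k p := by
  refine iSup₂_le fun s hs => ?_
  rcases (Finset.mem_Icc.mp hs).2.lt_or_eq with h | rfl
  · exact mmPow_le_mmStar A h k p
  · exact mmPow_card_le_mmStar A k p

theorem mmStar_eq_mmId_sup_mmPlus (k p : α) : mmStar A k p = mmId α k p ⊔ mmPlus A k p := by
  apply le_antisymm
  · refine iSup₂_le fun s hs => ?_
    rcases s with _ | s
    · exact le_sup_left
    · exact le_sup_of_le_right (mmPow_le_mmPlus A (by omega) (Finset.mem_range.mp hs).le k p)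
  · exact sup_le (mmPow_le_mmStar A (s := 0) (Fintype.card_pos_iff.mpr ⟨k⟩) k p)
      (mmPlus_le_mmStar A k p)

end KleeneStar

section BoundedFixedPoints

variable {α : Type*} [Fintype α] [DecidableEq α] (A : Matrix α α B) (lam : B)

def boundedSolutions (c : α → B) : Set (α → B) :=
  {u | u ≤ (fun _ => lam) ∧ mmVec A u ⊔ c = u}

def starLamRowSup : α → B := fun k => ⨆ i, mmStarLam A lam k i

def greatestSolution (c : α → B) : α → B :=
  mmVec (mmStar A) c ⊔ starLamRowSup A lam

theorem mmMul_mmStarLam_le {γ : Type*} (C : Matrix γ α B) (i : γ) (q : α) :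
    mmMul C (mmStarLam A lam) i q ≤ lam :=
  iSup_le fun _ => inf_le_right.trans (inf_le_left.trans inf_le_left)

theorem mmVec_mmStar_sup (c : α → B) : mmVec A (mmVec (mmStar A) c) ⊔ c = mmVec (mmStar A) c := by
  funext k
  rw [← mmVec_mmMul, mmMul_mmStar, Pi.sup_apply, sup_comm]
  simp only [mmVec, mmStar_eq_mmId_sup_mmPlus, inf_sup_right, iSup_sup_eq, iSup_mmId_inf]

theorem mmVec_starLamRowSup : mmVec A (starLamRowSup A lam) = starLamRowSup A lam := by
  funext k
  have hA : mmVec A (starLamRowSup A lam) k = ⨆ i, lam ⊓ mmPlus A i i ⊓ mmPlus A k i := by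
    simp only [mmVec, starLamRowSup, mmStarLam, inf_iSup_eq, ← mmMul_mmStar]
    rw [iSup_comm]
    exact iSup_congr fun i => by simp only [mmMul, inf_iSup_eq, inf_left_comm]
  rw [hA]
  apply le_antisymm
  · exact iSup_mono fun i => inf_le_inf_left _ (mmPlus_le_mmStar A k i)
  · refine iSup_le fun i => le_iSup_of_le i ?_
    by_cases hki : k = i
    · subst hki
      exact le_inf inf_le_left (inf_le_left.trans inf_le_right)
    · refine inf_le_inf_left _ (le_of_eq ?_)
      simp [mmStar_eq_mmId_sup_mmPlus, mmId, hki]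

theorem starLamRowSup_le (k : α) : starLamRowSup A lam k ≤ lam :=
  iSup_le fun _ => inf_le_left.trans inf_le_left

theorem greatestSolution_mem {c : α → B} (hc : c ≤ fun _ => lam) :
    greatestSolution A lam c ∈ boundedSolutions A lam c :=
  ⟨fun k => sup_le (mmVec_le_of_le _ hc k) (starLamRowSup_le A lam k), by
    rw [greatestSolution, mmVec_sup, mmVec_starLamRowSup, sup_right_comm, mmVec_mmStar_sup]⟩

theorem le_mmVec_mmStar_sup_mmVec_mmPow {u c : α → B} (hu : mmVec A u ⊔ c = u) (t : ℕ) :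
    u ≤ mmVec (mmStar A) c ⊔ mmVec (mmPow A t) u := by
  induction t with
  | zero => exact le_sup_of_le_right (mmVec_mmId u).ge
  | succ t ih =>
    calc u = mmVec A u ⊔ c := hu.symm
      _ ≤ mmVec A (mmVec (mmStar A) c ⊔ mmVec (mmPow A t) u) ⊔ c :=
          sup_le_sup_right (mmVec_mono A ih) c
      _ = mmVec (mmStar A) c ⊔ mmVec (mmPow A (t + 1)) u := by
          rw [mmVec_sup, sup_right_comm, mmVec_mmStar_sup, ← mmVec_mmMul]
          rfl

theorem mmVec_mmPow_card_le {u : α → B} (hu : u ≤ fun _ => lam) :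
    mmVec (mmPow A (Fintype.card α)) u ≤ starLamRowSup A lam := by
  intro k
  refine iSup_le fun p => ?_
  calc mmPow A (Fintype.card α) k p ⊓ u p ≤ (⨆ i, mmStar A k i ⊓ mmPlus A i i) ⊓ lam :=
        inf_le_inf (mmPow_card_le_iSup_mmStar_inf_mmPlus A k p) (hu p)
    _ = starLamRowSup A lam k := by
        simp only [iSup_inf_eq, starLamRowSup, mmStarLam]
        exact iSup_congr fun i => by ac_rfl

theorem isGreatest_greatestSolution {c : α → B} (hc : c ≤ fun _ => lam) :
    IsGreatest (boundedSolutions A lam c) (greatestSolution A lam c) :=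
  ⟨greatestSolution_mem A lam hc, fun _ ⟨hu, hsol⟩ =>
    (le_mmVec_mmStar_sup_mmVec_mmPow A hsol _).trans
      (sup_le_sup_left (mmVec_mmPow_card_le A lam hu) _)⟩

end BoundedFixedPoints

section Eigenvectors

def eigConst {n : ℕ} (A : Matrix (Fin n) (Fin n) B) (lam : B) (K L : Finset (Fin n)) : ↥K → B :=
  fun k => lam ⊓ ⨆ ℓ ∈ L, A k ℓ

variable {n : ℕ} (A : Matrix (Fin n) (Fin n) B) (lam : B) {K L : Finset (Fin n)}

theorem iSup_eq_sup_of_union_eq_univ (hU : K ∪ L = Finset.univ) (f : Fin n → B) :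
    ⨆ j, f j = (⨆ k : ↥K, f k) ⊔ ⨆ ℓ ∈ L, f ℓ := by
  rw [iSup_subtype (f := fun k : ↥K => f k), ← Finset.iSup_union, hU]
  simp

theorem inf_mmVec_eq (hU : K ∪ L = Finset.univ) {x : Fin n → B}
    (hK : ∀ k ∈ K, x k ≤ lam) (hL : ∀ ℓ ∈ L, lam ≤ x ℓ) (i : Fin n) :
    lam ⊓ mmVec A x i = (⨆ k : ↥K, A i k ⊓ x k) ⊔ (lam ⊓ ⨆ ℓ ∈ L, A i ℓ) := by
  rw [mmVec, inf_iSup_eq, iSup_eq_sup_of_union_eq_univ hU, inf_iSup₂_eq]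
  congr 1
  · exact iSup_congr fun k => inf_eq_right.mpr (inf_le_right.trans (hK k k.2))
  · refine iSup_congr fun ℓ => iSup_congr fun hℓ => ?_
    rw [← inf_assoc]
    exact inf_eq_left.mpr (inf_le_left.trans (hL ℓ hℓ))

theorem IsKLEig.restrict_mem_boundedSolutions (hU : K ∪ L = Finset.univ) {x : Fin n → B}
    (hx : IsKLEig A lam K L x) :
    (fun k : ↥K => x k) ∈ boundedSolutions (subM A K K) lam (eigConst A lam K L) ∧
      ∀ i : ↥(L2set A lam L), lam ≤ ⨆ k : ↥K, A i k ⊓ x k := by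
  obtain ⟨hAx, hK, hL⟩ := hx
  have hrow : ∀ i, (⨆ k : ↥K, A i k ⊓ x k) ⊔ (lam ⊓ ⨆ ℓ ∈ L, A i ℓ) = lam ⊓ x i := fun i => by
    rw [← inf_mmVec_eq A lam hU hK hL, hAx, inf_left_idem]
  refine ⟨⟨fun k => hK k k.2, funext fun k => ?_⟩, fun i => ?_⟩
  · exact (hrow k).trans (inf_eq_right.mpr (hK k k.2))
  · obtain ⟨hiL, hlt⟩ := Finset.mem_filter.mp i.2
    have hi := (hrow i).trans (inf_eq_left.mpr (hL i hiL))
    exact (le_sup_iff.mp hi.ge).resolve_right (inf_le_right.trans_lt hlt).not_ge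

theorem isKLEig_extend (hU : K ∪ L = Finset.univ) (hD : Disjoint K L) {u : ↥K → B}
    (hu : u ∈ boundedSolutions (subM A K K) lam (eigConst A lam K L))
    (hL₂ : ∀ i : ↥(L2set A lam L), lam ≤ ⨆ k : ↥K, A i k ⊓ u k) :
    IsKLEig A lam K L fun j => if h : j ∈ K then u ⟨j, h⟩ else lam := by
  set x : Fin n → B := fun j => if h : j ∈ K then u ⟨j, h⟩ else lam
  have hxK (k : ↥K) : x k = u k := dif_pos k.2
  have hxL (ℓ : Fin n) (hℓ : ℓ ∈ L) : x ℓ = lam := dif_neg (Finset.disjoint_right.mp hD hℓ)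
  have hx (j : Fin n) : x j ≤ lam := by
    by_cases hj : j ∈ K
    · exact (hxK ⟨j, hj⟩).trans_le (hu.1 _)
    · exact (dif_neg hj).le
  have hrow (i : Fin n) :
      mmVec A x i = (⨆ k : ↥K, A i k ⊓ u k) ⊔ (lam ⊓ ⨆ ℓ ∈ L, A i ℓ) := by
    rw [← inf_eq_right.mpr (mmVec_le_of_le A hx i),
      inf_mmVec_eq A lam hU (fun k _ => hx k) (fun ℓ hℓ => (hxL ℓ hℓ).ge)]
    simp only [hxK]
  refine ⟨funext fun i => ?_, fun k _ => hx k, fun ℓ hℓ => (hxL ℓ hℓ).ge⟩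
  rw [hrow, inf_eq_right.mpr (hx i)]
  by_cases hiK : i ∈ K
  · exact (congrFun hu.2 ⟨i, hiK⟩).trans (hxK ⟨i, hiK⟩).symm
  have hiL : i ∈ L := (Finset.mem_union.mp (hU ▸ Finset.mem_univ i)).resolve_left hiK
  rw [hxL i hiL]
  refine le_antisymm (sup_le ?_ inf_le_left) ?_
  · exact iSup_le fun k => inf_le_right.trans (hu.1 k)
  by_cases hi : lam ≤ ⨆ ℓ ∈ L, A i ℓ
  · exact le_sup_of_le_right (le_inf le_rfl hi)
  · exact le_sup_of_le_left (hL₂ ⟨i, Finset.mem_filter.mpr ⟨hiL, not_le.mp hi⟩⟩)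

theorem exists_isKLEig_iff (hU : K ∪ L = Finset.univ) (hD : Disjoint K L) :
    (∃ x, IsKLEig A lam K L x) ↔ ∀ i : ↥(L2set A lam L),
      lam ≤ ⨆ k : ↥K, A i k ⊓ greatestSolution (subM A K K) lam (eigConst A lam K L) k := by
  have hG := isGreatest_greatestSolution (subM A K K) lam (c := eigConst A lam K L)
    fun _ => inf_le_left
  constructor
  · rintro ⟨x, hx⟩ i
    obtain ⟨hmem, hrow⟩ := hx.restrict_mem_boundedSolutions A lam hU
    exact (hrow i).trans (iSup_mono fun k => inf_le_inf_left _ (hG.2 hmem k))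
  · exact fun h => ⟨_, isKLEig_extend A lam hU hD hG.1 h⟩

end Eigenvectors

section ReducedSystem

variable {n : ℕ} (A : Matrix (Fin n) (Fin n) B) (lam : B) {K L : Finset (Fin n)}

theorem bprime_eq (i : ↥(L2set A lam L)) :
    bprime A lam K L i = ⨆ k : ↥K, A i k ⊓ mmVec (mmStar (subM A K K)) (eigConst A lam K L) k := by
  have hc : eigConst A lam K L = mmVec (subM A K L) fun _ => lam ⊓ 1 := by
    funext k
    simp [eigConst, mmVec, subM, iSup_subtype, inf_iSup_eq, inf_comm, unitInterval.le_one']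
  change _ = mmVec (subM A (L2set A lam L) K) (mmVec (mmStar (subM A K K)) (eigConst A lam K L)) i
  rw [hc, mmVec_inf_left, mmVec_inf_left, mmVec_inf_left, bprime, mmVec_mmMul, mmVec_mmMul]

theorem iSup_mmMul_mmStarLam (i : ↥(L2set A lam L)) :
    ⨆ q, mmMul (subM A (L2set A lam L) K) (mmStarLam (subM A K K) lam) i q =
      ⨆ k : ↥K, A i k ⊓ starLamRowSup (subM A K K) lam k := by
  simp only [mmMul, starLamRowSup, inf_iSup_eq]
  exact iSup_comm

theorem iSup_inf_greatestSolution (i : ↥(L2set A lam L)) :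
    ⨆ k : ↥K, A i k ⊓ greatestSolution (subM A K K) lam (eigConst A lam K L) k =
      bprime A lam K L i ⊔
        ⨆ q, mmMul (subM A (L2set A lam L) K) (mmStarLam (subM A K K) lam) i q := by
  rw [bprime_eq, iSup_mmMul_mmStarLam, ← iSup_sup_eq]
  simp only [greatestSolution, Pi.sup_apply, inf_sup_left]

theorem Aprime_of_mem_K (hD : Disjoint K L) (i : ↥(L2set A lam L)) (j : ↥(NtilSet A lam K L))
    (hj : (j : Fin n) ∈ K) :
    Aprime A lam K L i j =
      mmMul (subM A (L2set A lam L) K) (mmStarLam (subM A K K) lam) i ⟨j, hj⟩ :=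
  dif_neg fun h => Finset.disjoint_left.mp hD hj (Finset.mem_sdiff.mp h).1

/-- Each column `ℓ ∈ L̃` of `A_{L₂K} ⊗ (A_{KK})* ⊗ A_{KL̃}` is a column of the matrix defining `b'`,
so its entries in a row with `b'_i < λ` are below `λ`, whatever `Λ` does. -/
theorem Aprime_lt_of_mem_LtilSet (i : ↥(L2set A lam L)) (j : ↥(NtilSet A lam K L))
    (hj : (j : Fin n) ∈ LtilSet A lam K L) (hb : bprime A lam K L i < lam) :
    Aprime A lam K L i j < lam := by
  rw [Aprime, dif_pos hj]
  refine (iSup_lt_iff_of_bot_lt (bot_le.trans_lt hb)).mpr fun ℓ => inf_le_left.trans_lt ?_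
  by_contra! h
  refine hb.not_ge (le_inf le_rfl (le_iSup_of_le ⟨ℓ, (Finset.mem_sdiff.mp ℓ.2).1⟩ ?_))
  exact le_inf h unitInterval.le_one'

theorem lam_le_bprime_sup_iff (hD : Disjoint K L) (i : ↥(L2set A lam L)) :
    lam ≤ bprime A lam K L i ⊔
        ⨆ q, mmMul (subM A (L2set A lam L) K) (mmStarLam (subM A K K) lam) i q ↔
      (bprime A lam K L i < lam → ∃ j, Aprime A lam K L i j = lam) := by
  constructor
  · intro h hb
    obtain ⟨q, hq⟩ := (le_iSup_iff_of_bot_lt (bot_le.trans_lt hb)).mp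
      ((le_sup_iff.mp h).resolve_left hb.not_ge)
    refine ⟨⟨q, Finset.mem_union_right _ q.2⟩, ?_⟩
    rw [Aprime_of_mem_K A lam hD _ _ q.2]
    exact le_antisymm (mmMul_mmStarLam_le _ lam _ i q) hq
  · intro h
    rcases (inf_le_left : bprime A lam K L i ≤ lam).lt_or_eq with hb | hb
    · obtain ⟨j, hj⟩ := h hb
      rcases Finset.mem_union.mp j.2 with hjL | hjK
      · exact absurd hj (Aprime_lt_of_mem_LtilSet A lam i j hjL hb).ne
      · refine le_sup_of_le_right (le_iSup_of_le ⟨j, hjK⟩ ?_)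
        rw [← Aprime_of_mem_K A lam hD i j hjK, hj]
    · exact le_sup_of_le_left hb.ge

theorem I0set_eq_iUnion_CsetKL_iff (K L : Finset (Fin n)) :
    I0set A lam K L = ⋃ j, CsetKL A lam K L j ↔
      ∀ i, bprime A lam K L i < lam → ∃ j, Aprime A lam K L i j = lam := by
  simp only [Set.ext_iff, I0set, CsetKL, Set.mem_iUnion, Set.mem_ofPred_eq]
  exact forall_congr' fun i =>
    ⟨fun h hb => (h.mp hb).imp fun _ => And.right,
      fun h => ⟨fun hb => (h hb).imp fun _ hj => ⟨hb, hj⟩, fun ⟨_, hb, _⟩ => hb⟩⟩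

end ReducedSystem

/-- A `(K,L)` `λ`-eigenvector of `A` exists iff `I₀ = ∪_{j ∈ Ñ} C_j`. -/
theorem stmt17 {n : ℕ} (A : Matrix (Fin n) (Fin n) B) (lam : B) (K L : Finset (Fin n))
    (hU : K ∪ L = Finset.univ) (hD : Disjoint K L) :
    (∃ x : Fin n → B, IsKLEig A lam K L x) ↔
      I0set A lam K L = ⋃ j : ↥(NtilSet A lam K L), CsetKL A lam K L j := by
  rw [exists_isKLEig_iff A lam hU hD, I0set_eq_iUnion_CsetKL_iff]
  exact forall_congr' fun i => by
    rw [iSup_inf_greatestSolution]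
    exact lam_le_bprime_sup_iff A lam hD i
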